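/- Any formal power series solution (a,b) ∈ ℝ[[t]]² of the system t·a' = P·a·b - a, t·b' = (P/2)(1-b²) - t·(PQ/2)(1-a²) - t·Q·b (where P, Q are expanded as formal power series of the analytic functions P(t) = √6√(2t²+2)/√(2t²+3), Q(t) = t/(t²+1)) with a(0) = 0, b(0) = 1 is uniquely determined by the coefficient a₀ = a'(0); moreover a is odd and b is even as a formal series. -/

import Mathlib

open PowerSeries

/-!
Linearised at `(a, b) = (0, 1)`, where `P(0) = 2`, the difference of two solutions satisfies
`(n - 1) αₙ = 0` and `(n + 2) βₙ = 0` at the lowest order `n` where it does not vanish, so every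
coefficient is forced except `α₁ = a'(0)`. Since `P` is even and `Q` is odd, the system is invariant
under `(a(t), b(t)) ↦ (-a(-t), b(-t))`, which fixes `a'(0)`; uniqueness then makes `a` odd and `b`
even.
-/

/-- The Taylor series at `0` of `P(t) = √6·√(2t²+2)/√(2t²+3)`. -/
noncomputable def Pseries : PowerSeries ℝ :=
  PowerSeries.mk fun n =>
    iteratedDeriv n (fun t : ℝ => Real.sqrt 6 * Real.sqrt (2 * t ^ 2 + 2) / Real.sqrt (2 * t ^ 2 + 3)) 0 /
      n.factorial

/-- The Taylor series at `0` of `Q(t) = t/(t²+1)`. -/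
noncomputable def Qseries : PowerSeries ℝ :=
  PowerSeries.mk fun n => iteratedDeriv n (fun t : ℝ => t / (t ^ 2 + 1)) 0 / n.factorial

/-- `(a,b)` is a formal power series solution of the invariant Spin(7) instanton system
`t·a' = P·a·b - a`, `t·b' = (P/2)(1-b²) - t·(PQ/2)(1-a²) - t·Q·b` with `a(0) = 0`, `b(0) = 1`. -/
def IsFormalSpin7Sol (a b : PowerSeries ℝ) : Prop :=
  PowerSeries.X * a.derivativeFun = Pseries * a * b - a ∧
  PowerSeries.X * b.derivativeFun =
    PowerSeries.C (1 / 2) * Pseries * (1 - b ^ 2) -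
      PowerSeries.X * (PowerSeries.C (1 / 2) * Pseries * Qseries) * (1 - a ^ 2) -
      PowerSeries.X * Qseries * b ∧
  PowerSeries.constantCoeff a = 0 ∧
  PowerSeries.constantCoeff b = 1

namespace PowerSeries

section CommSemiring

variable {R : Type*} [CommSemiring R]

theorem coeff_X_mul_derivative (f : R⟦X⟧) (n : ℕ) : coeff n (X * d⁄dX R f) = n * coeff n f := by
  cases n with
  | zero => simp
  | succ n => rw [coeff_succ_X_mul, coeff_derivative, mul_comm]; push_cast; rfl

theorem coeff_mul_of_X_pow_dvd {f u : R⟦X⟧} {n : ℕ} (h : X ^ n ∣ u) :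
    coeff n (f * u) = constantCoeff f * coeff n u := by
  obtain ⟨v, rfl⟩ := h
  simp [mul_left_comm f, coeff_X_pow_mul']

theorem coeff_X_mul_mul_of_X_pow_dvd {f u : R⟦X⟧} {n : ℕ} (h : X ^ n ∣ u) :
    coeff n (X * (f * u)) = 0 := by
  have : X ^ (n + 1) ∣ X * (f * u) := pow_succ' (X : R⟦X⟧) n ▸ mul_dvd_mul_left X (h.mul_left f)
  exact X_pow_dvd_iff.mp this n n.lt_succ_self

theorem X_pow_succ_dvd_of_X_pow_dvd {u : R⟦X⟧} {n : ℕ} (h : X ^ n ∣ u) (hn : coeff n u = 0) :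
    X ^ (n + 1) ∣ u := by
  rw [X_pow_dvd_iff] at h ⊢
  intro m hm
  rcases Nat.lt_succ_iff_lt_or_eq.mp hm with hm | rfl
  exacts [h m hm, hn]

theorem eq_zero_of_forall_X_pow_dvd {u : R⟦X⟧} (h : ∀ n, X ^ n ∣ u) : u = 0 := by
  ext n
  exact X_pow_dvd_iff.mp (h (n + 1)) n n.lt_succ_self

theorem constantCoeff_rescale (a : R) (f : R⟦X⟧) :
    constantCoeff (rescale a f) = constantCoeff f := by
  rw [← coeff_zero_eq_constantCoeff_apply, coeff_rescale, pow_zero, one_mul,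
    coeff_zero_eq_constantCoeff_apply]

theorem rescale_C (a r : R) : rescale a (C r) = C r := by
  ext n
  cases n <;> simp [coeff_rescale, coeff_C]

theorem derivative_rescale (a : R) (f : R⟦X⟧) :
    d⁄dX R (rescale a f) = C a * rescale a (d⁄dX R f) := by
  ext n
  simp only [coeff_derivative, coeff_rescale, coeff_C_mul, pow_succ]
  ring

end CommSemiring

section ReflectionParity

variable {R : Type*} [CommRing R] [NoZeroDivisors R] [CharZero R] {f : R⟦X⟧} {n : ℕ}

theorem coeff_eq_zero_of_rescale_neg_one_eq (hf : rescale (-1) f = f) (hn : Odd n) :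
    coeff n f = 0 := by
  have := congrArg (coeff n) hf
  rwa [coeff_rescale, hn.neg_one_pow, neg_one_mul, CharZero.neg_eq_self_iff] at this

theorem coeff_eq_zero_of_rescale_neg_one_eq_neg (hf : rescale (-1) f = -f) (hn : Even n) :
    coeff n f = 0 := by
  have := congrArg (coeff n) hf
  rwa [coeff_rescale, hn.neg_one_pow, one_mul, map_neg, CharZero.eq_neg_self_iff] at this

end ReflectionParity

end PowerSeries

section TaylorSeries

variable {𝕜 : Type*} [NontriviallyNormedField 𝕜]

noncomputable def taylorSeries (f : 𝕜 → 𝕜) : 𝕜⟦X⟧ :=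
  mk fun n => iteratedDeriv n f 0 / n.factorial

theorem rescale_neg_one_taylorSeries (f : 𝕜 → 𝕜) :
    rescale (-1) (taylorSeries f) = taylorSeries fun x => f (-x) := by
  ext n
  simp [taylorSeries, coeff_rescale, iteratedDeriv_comp_neg, mul_div_assoc]

theorem taylorSeries_neg (f : 𝕜 → 𝕜) : taylorSeries (fun x => -f x) = -taylorSeries f := by
  ext n
  simp [taylorSeries, neg_div]

end TaylorSeries

theorem rescale_neg_one_Pseries : rescale (-1) Pseries = Pseries := by
  refine (rescale_neg_one_taylorSeries _).trans ?_
  simp only [neg_sq]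
  rfl

theorem rescale_neg_one_Qseries : rescale (-1) Qseries = -Qseries := by
  refine (rescale_neg_one_taylorSeries _).trans ?_
  simp only [neg_sq, neg_div]
  exact taylorSeries_neg _

theorem constantCoeff_Pseries : constantCoeff Pseries = 2 := by
  have h6 : √6 = √2 * √3 := by rw [← Real.sqrt_mul (by norm_num)]; norm_num
  rw [← coeff_zero_eq_constantCoeff_apply]
  simp only [Pseries, coeff_mk, iteratedDeriv_zero]
  norm_num [h6]
  rw [mul_right_comm, Real.mul_self_sqrt zero_le_two, mul_div_cancel_right₀ _ (by positivity)]

namespace IsFormalSpin7Sol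

variable {a b a' b' : ℝ⟦X⟧}

theorem iff_derivative : IsFormalSpin7Sol a b ↔
    X * d⁄dX ℝ a = Pseries * a * b - a ∧
    X * d⁄dX ℝ b = C (1 / 2) * Pseries * (1 - b ^ 2) -
      X * (C (1 / 2) * Pseries * Qseries) * (1 - a ^ 2) - X * Qseries * b ∧
    constantCoeff a = 0 ∧ constantCoeff b = 1 :=
  Iff.rfl

theorem X_mul_derivative_sub_fst (hs : IsFormalSpin7Sol a b) (hs' : IsFormalSpin7Sol a' b') :
    X * d⁄dX ℝ (a - a') = Pseries * b * (a - a') + Pseries * a' * (b - b') - (a - a') := by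
  rw [map_sub]
  linear_combination (iff_derivative.mp hs).1 - (iff_derivative.mp hs').1

theorem X_mul_derivative_sub_snd (hs : IsFormalSpin7Sol a b) (hs' : IsFormalSpin7Sol a' b') :
    X * d⁄dX ℝ (b - b') = -(C (1 / 2) * Pseries * (b + b')) * (b - b') +
      X * (C (1 / 2) * Pseries * Qseries * (a + a') * (a - a')) - X * (Qseries * (b - b')) := by
  rw [map_sub]
  linear_combination (iff_derivative.mp hs).2.1 - (iff_derivative.mp hs').2.1

theorem coeff_sub_fst_eq_zero (hs : IsFormalSpin7Sol a b) (hs' : IsFormalSpin7Sol a' b') {n : ℕ}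
    (ha : X ^ n ∣ a - a') (hb : X ^ n ∣ b - b') (hn : n ≠ 1) : coeff n (a - a') = 0 := by
  have h := congrArg (coeff n) (hs.X_mul_derivative_sub_fst hs')
  rw [map_sub (coeff n), map_add, coeff_X_mul_derivative, coeff_mul_of_X_pow_dvd ha,
    coeff_mul_of_X_pow_dvd hb, map_mul, map_mul, constantCoeff_Pseries, hs.2.2.2,
    hs'.2.2.1] at h
  have h' : ((n : ℝ) - 1) * coeff n (a - a') = 0 := by linear_combination h
  exact (mul_eq_zero.mp h').resolve_left (sub_ne_zero.mpr (by exact_mod_cast hn))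

theorem coeff_sub_snd_eq_zero (hs : IsFormalSpin7Sol a b) (hs' : IsFormalSpin7Sol a' b') {n : ℕ}
    (ha : X ^ n ∣ a - a') (hb : X ^ n ∣ b - b') : coeff n (b - b') = 0 := by
  have h := congrArg (coeff n) (hs.X_mul_derivative_sub_snd hs')
  rw [map_sub (coeff n), map_add, coeff_X_mul_derivative, coeff_mul_of_X_pow_dvd hb,
    coeff_X_mul_mul_of_X_pow_dvd ha, coeff_X_mul_mul_of_X_pow_dvd hb, map_neg, map_mul, map_mul,
    map_add, constantCoeff_C, constantCoeff_Pseries, hs.2.2.2, hs'.2.2.2] at h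
  have h' : ((n : ℝ) + 2) * coeff n (b - b') = 0 := by linear_combination h
  exact (mul_eq_zero.mp h').resolve_left (by positivity)

theorem eq_of_coeff_one_eq (hs : IsFormalSpin7Sol a b) (hs' : IsFormalSpin7Sol a' b')
    (h₁ : coeff 1 a = coeff 1 a') : a = a' ∧ b = b' := by
  have hdvd : ∀ n, X ^ n ∣ a - a' ∧ X ^ n ∣ b - b' := by
    intro n
    induction n with
    | zero => simp
    | succ n ih =>
      obtain ⟨ha, hb⟩ := ih
      have hα : coeff n (a - a') = 0 := by
        rcases eq_or_ne n 1 with rfl | hn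
        · rw [map_sub, h₁, sub_self]
        · exact hs.coeff_sub_fst_eq_zero hs' ha hb hn
      exact ⟨X_pow_succ_dvd_of_X_pow_dvd ha hα,
        X_pow_succ_dvd_of_X_pow_dvd hb (hs.coeff_sub_snd_eq_zero hs' ha hb)⟩
  exact ⟨sub_eq_zero.mp (eq_zero_of_forall_X_pow_dvd fun n => (hdvd n).1),
    sub_eq_zero.mp (eq_zero_of_forall_X_pow_dvd fun n => (hdvd n).2)⟩

theorem reflect (hs : IsFormalSpin7Sol a b) :
    IsFormalSpin7Sol (-rescale (-1) a) (rescale (-1) b) := by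
  obtain ⟨ha, hb, ha₀, hb₀⟩ := iff_derivative.mp hs
  have ha' := congrArg (rescale (-1 : ℝ)) ha
  have hb' := congrArg (rescale (-1 : ℝ)) hb
  simp only [map_mul, map_sub, map_one, map_pow, rescale_neg_one_X, rescale_neg_one_Pseries,
    rescale_neg_one_Qseries, rescale_C] at ha' hb'
  refine iff_derivative.mpr ⟨?_, ?_, ?_, ?_⟩
  · simp only [map_neg, map_one, derivative_rescale]
    linear_combination -ha'
  · simp only [derivative_rescale, map_neg, map_one]
    linear_combination hb'
  · rw [map_neg, constantCoeff_rescale, ha₀, neg_zero]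
  · rw [constantCoeff_rescale, hb₀]

end IsFormalSpin7Sol

/-- A formal power series solution of the invariant Spin(7) instanton system with `a(0) = 0`,
`b(0) = 1` is uniquely determined by the coefficient `a₀ = a'(0)`; moreover `a` is odd and `b`
is even as a formal series. -/
theorem formal_spin7_solution_unique_and_parity :
    (∀ a b a' b' : PowerSeries ℝ, IsFormalSpin7Sol a b → IsFormalSpin7Sol a' b' →
      PowerSeries.coeff 1 a = PowerSeries.coeff 1 a' → a = a' ∧ b = b') ∧
    (∀ a b : PowerSeries ℝ, IsFormalSpin7Sol a b →
      (∀ n : ℕ, Even n → PowerSeries.coeff n a = 0) ∧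
      (∀ n : ℕ, Odd n → PowerSeries.coeff n b = 0)) := by
  refine ⟨fun a b a' b' hs hs' h₁ => hs.eq_of_coeff_one_eq hs' h₁, fun a b hs => ?_⟩
  obtain ⟨ha, hb⟩ := hs.eq_of_coeff_one_eq hs.reflect (by simp [coeff_rescale])
  exact ⟨fun n => coeff_eq_zero_of_rescale_neg_one_eq_neg (neg_eq_iff_eq_neg.mp ha.symm),
    fun n => coeff_eq_zero_of_rescale_neg_one_eq hb.symm⟩
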